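/- arXiv:2310.16966 — 2 statements merged into one kernel-verified Lean document; each statement's English description precedes it below -/
import Mathlib

section
/- There exist constants C, c > 0 depending only on α such that for all j ≥ 1 and all real t ≥ a_j, one has log(φ_{j−1}(t)/φ_j(t)) ≤ −c 2^j j^{−β} + C. -/
open MeasureTheory ProbabilityTheory Filter
open scoped Classical

noncomputable section

/-- `mseq α j = 2⌊j^(1/α)⌋`, the sequence `m_j` from the construction. -/
def mseq (α : ℝ) (j : ℕ) : ℕ := 2 * ⌊(j : ℝ) ^ (1 / α)⌋₊

/-- The index `j` of the block `I_j = (m_(j-1), m_j]` containing `k`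
(with the convention `m_(-1) = -1`). -/
def blockIdx (α : ℝ) (k : ℕ) : ℕ := sInf {j : ℕ | k ≤ mseq α j}

/-- The deterministic coefficient sequence: `c_k = exp (-2^j)` for `k ∈ I_j`. -/
def cseq (α : ℝ) (k : ℕ) : ℝ := Real.exp (-(2 : ℝ) ^ blockIdx α k)

/-- `j_* = max {j : I_j ∩ {0,…,n} ≠ ∅}`, the index of the block containing `n`. -/
def jStar (α : ℝ) (n : ℕ) : ℕ := blockIdx α n

/-- `β = min {1/2, (1-α)/(2α)}`. -/
def betaC (α : ℝ) : ℝ := min (1 / 2) ((1 - α) / (2 * α))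

/-- `a_j = α j^(1-1/α) 2^(j-2) (1 + j^(-β))`. -/
def aseq (α : ℝ) (j : ℕ) : ℝ :=
  α * (j : ℝ) ^ (1 - 1 / α) * (2 : ℝ) ^ ((j : ℤ) - 2) * (1 + (j : ℝ) ^ (-betaC α))

/-- `b_j = α j^(1-1/α) 2^(j-1) (1 - j^(-β))`. -/
def bseq (α : ℝ) (j : ℕ) : ℝ :=
  α * (j : ℝ) ^ (1 - 1 / α) * (2 : ℝ) ^ ((j : ℤ) - 1) * (1 - (j : ℝ) ^ (-betaC α))

/-- `φ_j(t) = c_(m_j) e^(t m_j)` with `c_(m_j) = exp (-2^j)`. -/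
def phi (α : ℝ) (j : ℕ) (t : ℝ) : ℝ := Real.exp (-(2 : ℝ) ^ j) * Real.exp (t * mseq α j)

/-- `g_n(t) = f_n(e^t) = ∑_{k=0}^n c_k ε_k e^{tk}`. -/
def gval (α : ℝ) {Ω : Type*} (ε : ℕ → Ω → ℝ) (n : ℕ) (ω : Ω) (t : ℝ) : ℝ :=
  ∑ k ∈ Finset.range (n + 1), cseq α k * ε k ω * Real.exp (t * k)

/-- `R_n`: the number of real roots of `f_n(z) = ∑_{k=0}^n c_k ε_k z^k`
(counted without multiplicity). -/
def Rroots (α : ℝ) {Ω : Type*} (ε : ℕ → Ω → ℝ) (n : ℕ) (ω : Ω) : ℕ :=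
  Set.ncard {t : ℝ | ∑ k ∈ Finset.range (n + 1), cseq α k * ε k ω * t ^ k = 0}

/-- `S_n`: the number of sign changes among `(ε_(m_0), …, ε_(m_(j_*-1)), ε_n)`. -/
def Schanges (α : ℝ) {Ω : Type*} (ε : ℕ → Ω → ℝ) (n : ℕ) (ω : Ω) : ℕ :=
  ((Finset.range (jStar α n)).filter fun j =>
    ε (mseq α j) ω * (if j + 1 < jStar α n then ε (mseq α (j + 1)) ω else ε n ω) < 0).card

set_option maxHeartbeats 1000000 in
/-- There are constants `C, c > 0` depending only on `α` so that for all `j ≥ 1` and all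
`t ≥ a_j`, one has `log (φ_(j-1)(t) / φ_j(t)) ≤ -c 2^j j^(-β) + C`. -/
theorem statement6 (α : ℝ) (hα : α ∈ Set.Ioo (0 : ℝ) 1) :
    ∃ C > (0 : ℝ), ∃ c > (0 : ℝ), ∀ j : ℕ, 1 ≤ j → ∀ t : ℝ, aseq α j ≤ t →
      Real.log (phi α (j - 1) t / phi α j t) ≤ -c * 2 ^ j * (j : ℝ) ^ (-betaC α) + C := by
  obtain ⟨hα0, hα1⟩ := hα
  set β := betaC α with hβdef
  have hβpos : 0 < β := lt_min (by norm_num) (div_pos (by linarith) (by linarith))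
  have hβhalf : β ≤ 1/2 := min_le_left _ _
  have hβ1 : β < 1 := lt_of_le_of_lt hβhalf (by norm_num)
  set q : ℝ := 1/α - 1 with hqdef
  have hq : 0 < q := by
    have h : 1 < 1/α := by rw [lt_div_iff₀ hα0]; linarith
    rw [hqdef]; linarith
  have hβq : β < q := by
    have h2 : β ≤ (1-α)/(2*α) := min_le_right _ _
    have h1 : (1-α)/(2*α) < q := by
      rw [hqdef, div_lt_iff₀ (by linarith : (0:ℝ) < 2*α)]
      have h3 : (1/α - 1)*(2*α) = 2 - 2*α := by field_simp
      rw [h3]; linarith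
    exact lt_of_le_of_lt h2 h1
  clear_value β q
  have hE : Filter.Tendsto (fun j : ℕ => 4*(q+1)*((j:ℝ)^(β-1) + (j:ℝ)^(β-q))) atTop (nhds 0) := by
    have h1 : Filter.Tendsto (fun x : ℝ => x ^ (β-1)) atTop (nhds 0) := by
      simpa [neg_sub] using tendsto_rpow_neg_atTop (y := 1 - β) (by linarith)
    have h2 : Filter.Tendsto (fun x : ℝ => x ^ (β-q)) atTop (nhds 0) := by
      simpa [neg_sub] using tendsto_rpow_neg_atTop (y := q - β) (by linarith)
    have h3 := ((h1.comp tendsto_natCast_atTop_atTop).add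
      (h2.comp tendsto_natCast_atTop_atTop)).const_mul (4*(q+1))
    simpa using h3
  obtain ⟨J₀, hJ₀⟩ := Filter.eventually_atTop.mp (hE.eventually_lt_const (by norm_num : (0:ℝ) < 1))
  set J : ℕ := max J₀ 2 with hJdef
  refine ⟨(2:ℝ)^(J+1), by positivity, 1/4, by norm_num, ?_⟩
  intro j hj t ht
  set x : ℝ := (j : ℝ) with hxdef
  have hx1 : (1:ℝ) ≤ x := by rw [hxdef]; exact_mod_cast hj
  clear_value x
  have hx0 : (0:ℝ) < x := by linarith
  have hB1 : x^(-β) ≤ 1 := Real.rpow_le_one_of_one_le_of_nonpos hx1 (by linarith)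
  have hB0 : 0 < x^(-β) := Real.rpow_pos_of_pos hx0 _
  have haj : 0 < aseq α j := by
    rw [aseq, ← hxdef, ← hβdef]
    have h1 : (0:ℝ) < x ^ (1 - 1/α) := Real.rpow_pos_of_pos hx0 _
    have h2 : (0:ℝ) < (2:ℝ) ^ ((j:ℤ) - 2) := zpow_pos (by norm_num) _
    exact mul_pos (mul_pos (mul_pos hα0 h1) h2) (by linarith)
  have hfloor : ∀ k : ℕ, (mseq α k : ℝ) = 2 * (⌊((k:ℝ))^(1/α)⌋₊ : ℝ) := by
    intro k; rw [mseq]; push_cast; ring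
  have hmono : (mseq α (j-1) : ℝ) ≤ (mseq α j : ℝ) := by
    have : mseq α (j-1) ≤ mseq α j := by
      unfold mseq
      have : ((j-1:ℕ):ℝ) ^ (1/α) ≤ ((j:ℕ):ℝ) ^ (1/α) :=
        Real.rpow_le_rpow (by positivity) (by exact_mod_cast Nat.sub_le j 1)
          (le_of_lt (one_div_pos.mpr hα0))
      exact Nat.mul_le_mul_left 2 (Nat.floor_le_floor this)
    exact_mod_cast this
  set Δ : ℝ := (mseq α j : ℝ) - (mseq α (j-1) : ℝ) with hΔdef
  have hΔ0 : 0 ≤ Δ := by rw [hΔdef]; linarith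
  clear_value Δ
  have hlog : Real.log (phi α (j - 1) t / phi α j t) = (2:ℝ)^(j-1) - t * Δ := by
    unfold phi
    rw [← Real.exp_add, ← Real.exp_add, Real.log_div (Real.exp_ne_zero _) (Real.exp_ne_zero _),
      Real.log_exp, Real.log_exp]
    have h2 : (2:ℝ)^j = 2 * (2:ℝ)^(j-1) := by
      conv_lhs => rw [show j = (j-1)+1 by omega]
      rw [pow_succ]; ring
    rw [hΔdef]; rw [h2]; ring
  rw [hlog]
  have htΔ : aseq α j * Δ ≤ t * Δ := mul_le_mul_of_nonneg_right ht hΔ0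
  by_cases hJj : J ≤ j
  · -- main case
    have hj2 : 2 ≤ j := le_trans (le_max_right _ _) hJj
    set y : ℝ := ((j-1:ℕ):ℝ) with hydef
    have hy1 : (1:ℝ) ≤ y := by
      rw [hydef]; exact_mod_cast Nat.le_sub_of_add_le (by omega)
    clear_value y
    have hyx : y = x - 1 := by rw [hydef, hxdef]; push_cast [Nat.cast_sub hj]; ring
    have hy0 : (0:ℝ) < y := by linarith
    have hxy : x = y + 1 := by rw [hyx]; ring
    have h1x0 : (0:ℝ) < 1/x := one_div_pos.mpr hx0
    have h1y0 : (0:ℝ) < 1/y := one_div_pos.mpr hy0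
    -- floor bound
    have hΔlb : 2*((x^(1/α) - 1) - y^(1/α)) ≤ Δ := by
      rw [hΔdef, hfloor j, hfloor (j-1), ← hxdef, ← hydef]
      have h1 : x^(1/α) - 1 < (⌊x^(1/α)⌋₊ : ℝ) := Nat.sub_one_lt_floor _
      have h2 : (⌊y^(1/α)⌋₊:ℝ) ≤ y^(1/α) := Nat.floor_le (Real.rpow_nonneg hy0.le _)
      linarith
    -- Bernoulli
    have hbern : y^(1/α) + (1/α) * y^q ≤ x^(1/α) := by
      have hp1 : (1:ℝ) ≤ 1/α := by rw [le_div_iff₀ hα0]; linarith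
      have hs : (-1:ℝ) ≤ 1/y := le_trans (by norm_num) h1y0.le
      have hb := one_add_mul_self_le_rpow_one_add hs hp1
      have hmul : y^(1/α) * (1 + (1/α) * (1/y)) ≤ y^(1/α) * (1 + 1/y)^(1/α) :=
        mul_le_mul_of_nonneg_left hb (Real.rpow_nonneg hy0.le _)
      have hrw : y^(1/α) * (1 + 1/y)^(1/α) = x^(1/α) := by
        rw [← Real.mul_rpow hy0.le (by linarith : (0:ℝ) ≤ 1 + 1/y)]
        congr 1
        rw [mul_add, mul_one, mul_one_div, div_self hy0.ne', hyx]
        ring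
      have hrw2 : y^(1/α) * (1 + (1/α) * (1/y)) = y^(1/α) + (1/α) * y^q := by
        have hyq : y^q = y^(1/α) / y := by
          rw [hqdef, Real.rpow_sub hy0, Real.rpow_one]
        rw [hyq]
        field_simp
      rw [hrw, hrw2] at hmul
      exact hmul
    -- scalar inequality
    have hWrw : x^(-q) * y^q = (y/x)^q := by
      rw [Real.div_rpow hy0.le hx0.le, Real.rpow_neg hx0.le]
      ring
    have hW : 1 - (q+1)*(1/x) ≤ x^(-q) * y^q := by
      rw [hWrw]
      rcases le_or_gt 1 q with hq1 | hq1
      · have hs : (-1:ℝ) ≤ -(1/x) := by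
          have : 1/x ≤ 1 := by rw [div_le_one hx0]; linarith
          linarith
        have hbb := one_add_mul_self_le_rpow_one_add hs hq1
        have hrw : (1 + -(1/x)) = y/x := by rw [hyx]; field_simp; ring
        rw [hrw] at hbb
        nlinarith [hbb, h1x0]
      · have hb0 : (0:ℝ) < y/x := div_pos hy0 hx0
        have hb1 : y/x ≤ 1 := by rw [div_le_one hx0]; linarith
        have h := Real.rpow_le_rpow_of_exponent_ge hb0 hb1 hq1.le
        rw [Real.rpow_one] at h
        have hyxx : y/x = 1 - 1/x := by rw [hyx, sub_div, div_self hx0.ne', one_div]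
        rw [hyxx] at h ⊢
        nlinarith [h, mul_pos hq h1x0]
    have hU0 : (0:ℝ) < x^(-q) := Real.rpow_pos_of_pos hx0 _
    -- error control from eventual bound
    have hEj : 4*(q+1)*(x^(β-1) + x^(β-q)) < 1 := by
      rw [hxdef]; exact hJ₀ j (le_trans (le_max_left _ _) hJj)
    have herr : 4*(q+1)*(1/x + x^(-q)) ≤ x^(-β) := by
      have h1 : x^(β-1) * x^(-β) = 1/x := by
        rw [← Real.rpow_add hx0, show β - 1 + -β = -1 by ring, Real.rpow_neg_one, one_div]
      have h2 : x^(β-q) * x^(-β) = x^(-q) := by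
        rw [← Real.rpow_add hx0]; congr 1; ring
      have hm := mul_le_mul_of_nonneg_right hEj.le hB0.le
      calc 4*(q+1)*(1/x + x^(-q)) = (4*(q+1)*(x^(β-1) + x^(β-q))) * x^(-β) := by
            rw [← h1, ← h2]; ring
        _ ≤ 1 * x^(-β) := hm
        _ = x^(-β) := one_mul _
    have hscalar : 1 + (1/2)*x^(-β) ≤ (1 + x^(-β)) * (x^(-q)*y^q - α * x^(-q)) := by
      nlinarith [mul_le_mul_of_nonneg_left hW (by linarith : (0:ℝ) ≤ 1 + x^(-β)),
        mul_pos hB0 hU0, mul_pos hB0 h1x0, hU0, h1x0]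
    -- powers of two
    set P : ℝ := (2:ℝ)^(j-1) with hPdef
    have hP0 : 0 < P := by rw [hPdef]; positivity
    have hz : (2:ℝ)^((j:ℤ)-2) = P/2 := by
      rw [show (j:ℤ)-2 = ((j-2:ℕ):ℤ) by omega, zpow_natCast, hPdef,
        show j-1 = (j-2)+1 by omega, pow_succ]
      ring
    have h2j : (2:ℝ)^j = 2*P := by
      rw [hPdef]
      conv_lhs => rw [show j = (j-1)+1 by omega]
      rw [pow_succ]; ring
    clear_value P
    -- algebraic identity
    have hajrw : aseq α j = α * x^(-q) * (P/2) * (1 + x^(-β)) := by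
      rw [aseq, ← hz, ← hβdef, ← hxdef, show 1 - 1/α = -q by rw [hqdef]; ring]
    have heq : aseq α j * (2*((1/α)*y^q - 1)) = P * ((1 + x^(-β)) * (x^(-q)*y^q - α * x^(-q))) := by
      rw [hajrw]
      field_simp
    -- chain
    have hchain : P * (1 + (1/2)*x^(-β)) ≤ t * Δ := by
      calc P * (1 + (1/2)*x^(-β)) ≤ P * ((1 + x^(-β)) * (x^(-q)*y^q - α * x^(-q))) :=
            mul_le_mul_of_nonneg_left hscalar hP0.le
        _ = aseq α j * (2*((1/α)*y^q - 1)) := heq.symm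
        _ ≤ aseq α j * (2*((x^(1/α) - 1) - y^(1/α))) := by
            apply mul_le_mul_of_nonneg_left _ haj.le
            linarith
        _ ≤ aseq α j * Δ := mul_le_mul_of_nonneg_left hΔlb haj.le
        _ ≤ t * Δ := htΔ
    have hC0 : (0:ℝ) < (2:ℝ)^(J+1) := by positivity
    rw [h2j]
    nlinarith [hchain, hC0]
  · -- small j case
    push_neg at hJj
    have htΔ0 : 0 ≤ t * Δ := mul_nonneg (le_trans haj.le ht) hΔ0
    have h2j : (2:ℝ)^j ≤ (2:ℝ)^J := pow_le_pow_right₀ (by norm_num) hJj.le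
    have h2j1 : (2:ℝ)^(j-1) ≤ (2:ℝ)^j := pow_le_pow_right₀ (by norm_num) (Nat.sub_le j 1)
    have h2J : (2:ℝ)^(J+1) = 2 * (2:ℝ)^J := by rw [pow_succ]; ring
    have hBmul : (1/4:ℝ) * 2^j * x^(-β) ≤ (1/4) * 2^j := by
      nlinarith [pow_pos (by norm_num : (0:ℝ) < 2) j, hB1, hB0]
    linarith [pow_pos (by norm_num : (0:ℝ) < 2) j]
end
end

section
/- There exist constants C, c > 0 depending only on α such that for all j ≥ 1 and all real t ≤ b_j, one has log(φ_{j+1}(t)/φ_j(t)) ≤ −c 2^j j^{−β} + C. -/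
open MeasureTheory ProbabilityTheory Filter
open scoped Classical

noncomputable section

/-! Since `log (φ_{j+1}(t) / φ_j(t)) = -2^j + t (m_{j+1} - m_j)` is nondecreasing in `t`, it
suffices to bound `-2^j + b_j (m_{j+1} - m_j)`. Convexity of `x ↦ x^{1/α}` gives
`m_{j+1} - m_j ≤ 2 ((1/α) (j+1)^{1/α-1} + 1)`, hence
`b_j (m_{j+1} - m_j) ≤ 2^j (1 - j^{-β}) (1 + O(1/j) + O(j^{1-1/α}))`. As `β < 1` and `β < 1/α - 1`,
the error terms are eventually below `j^{-β}/4`, so `-2^j + b_j (m_{j+1} - m_j) ≤ -2^j j^{-β}/4`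
for large `j`; the finitely many remaining `j` are absorbed into `C`. -/

open Real Topology

lemma rpow_sub_rpow_le_mul_rpow_sub_one {p a b : ℝ} (hp : 1 ≤ p) (ha : 0 ≤ a) (hab : a ≤ b) :
    b ^ p - a ^ p ≤ p * b ^ (p - 1) * (b - a) := by
  rcases hab.eq_or_lt with rfl | hab'
  · simp
  have hb : 0 < b := ha.trans_lt hab'
  have hbern := one_add_mul_self_le_rpow_one_add (s := a / b - 1) (by
    have : 0 ≤ a / b := div_nonneg ha hb.le
    linarith) hp
  rw [add_sub_cancel, div_rpow ha hb.le, le_div_iff₀ (rpow_pos_of_pos hb p)] at hbern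
  have hbp : b ^ p = b ^ (p - 1) * b := by rw [rpow_sub_one hb.ne', div_mul_cancel₀ _ hb.ne']
  rw [hbp] at hbern ⊢
  have : (1 + p * (a / b - 1)) * (b ^ (p - 1) * b) = b ^ (p - 1) * (b + p * (a - b)) := by
    field_simp
  linarith

lemma one_add_rpow_le_exp_mul {q x : ℝ} (hq : 0 ≤ q) (hx : -1 < x) :
    (1 + x) ^ q ≤ exp (q * x) := by
  rw [rpow_def_of_pos (by linarith), exp_le_exp, mul_comm]
  exact mul_le_mul_of_nonneg_left (by linarith [log_le_sub_one_of_pos (by linarith : 0 < 1 + x)]) hq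

lemma exp_sub_one_le_two_mul {y : ℝ} (hy₀ : 0 ≤ y) (hy₁ : y ≤ 1) : exp y - 1 ≤ 2 * y := by
  have h := abs_exp_sub_one_le (x := y) (by rwa [abs_of_nonneg hy₀])
  rw [abs_of_nonneg hy₀] at h
  exact (le_abs_self _).trans h

lemma exists_pos_forall_le_of_eventually_le {u : ℕ → ℝ} {a : ℝ} (h : ∀ᶠ n in atTop, u n ≤ a) :
    ∃ C > 0, ∀ n, u n ≤ C := by
  obtain ⟨B, hB⟩ := (isBoundedUnder_of_eventually_le h).bddAbove_range
  exact ⟨max B 1, by positivity, fun n => (hB ⟨n, rfl⟩).trans (le_max_left _ _)⟩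

lemma eventually_mul_rpow_neg_add_le {β r s : ℝ} (hr : β < r) (hs : β < s) (a b : ℝ) {c : ℝ}
    (hc : 0 < c) :
    ∀ᶠ n : ℕ in atTop, a * (n : ℝ) ^ (-r) + b * (n : ℝ) ^ (-s) ≤ c * (n : ℝ) ^ (-β) := by
  have hlim : Tendsto (fun n : ℕ => a * (n : ℝ) ^ (-(r - β)) + b * (n : ℝ) ^ (-(s - β)))
      atTop (𝓝 0) := by
    have h := ((tendsto_rpow_neg_atTop (sub_pos.2 hr)).const_mul a).add
      ((tendsto_rpow_neg_atTop (sub_pos.2 hs)).const_mul b)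
    simpa [Function.comp_def] using h.comp tendsto_natCast_atTop_atTop
  filter_upwards [hlim.eventually_lt_const hc, eventually_gt_atTop 0] with n hn hn0
  have hpos : (0 : ℝ) < n := by exact_mod_cast hn0
  have hsplit : ∀ γ, (n : ℝ) ^ (-γ) = (n : ℝ) ^ (-(γ - β)) * (n : ℝ) ^ (-β) := fun γ => by
    rw [← rpow_add hpos]; ring_nf
  rw [hsplit r, hsplit s]
  nlinarith [rpow_pos_of_pos hpos (-β)]

lemma rpow_add_one_sub_rpow_le {p x : ℝ} (hp : 1 ≤ p) (hx : 0 < x) :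
    (x + 1) ^ p - x ^ p ≤ p * x ^ (p - 1) * exp ((p - 1) / x) := by
  have hsplit : (x + 1) ^ (p - 1) = x ^ (p - 1) * (1 + 1 / x) ^ (p - 1) := by
    rw [← mul_rpow hx.le (by positivity), mul_one_add, mul_one_div_cancel hx.ne']
  have hexp : (1 + 1 / x) ^ (p - 1) ≤ exp ((p - 1) / x) := by
    have h := one_add_rpow_le_exp_mul (sub_nonneg.2 hp)
      (by linarith [one_div_pos.2 hx] : (-1 : ℝ) < 1 / x)
    rwa [mul_one_div] at h
  calc (x + 1) ^ p - x ^ p ≤ p * (x + 1) ^ (p - 1) * (x + 1 - x) :=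
        rpow_sub_rpow_le_mul_rpow_sub_one hp hx.le (by linarith)
    _ = p * x ^ (p - 1) * (1 + 1 / x) ^ (p - 1) := by rw [hsplit]; ring
    _ ≤ p * x ^ (p - 1) * exp ((p - 1) / x) := by gcongr

lemma log_phi_succ_div_phi (α : ℝ) (j : ℕ) (t : ℝ) :
    log (phi α (j + 1) t / phi α j t) = -2 ^ j + t * ((mseq α (j + 1) : ℝ) - mseq α j) := by
  simp only [phi, ← exp_add, ← exp_sub, log_exp]
  ring

lemma mseq_succ_sub_le (α : ℝ) (j : ℕ) :
    (mseq α (j + 1) : ℝ) - mseq α j ≤ 2 * (((j : ℝ) + 1) ^ (1 / α) - (j : ℝ) ^ (1 / α) + 1) := by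
  have hle := Nat.floor_le (rpow_nonneg (by positivity : (0 : ℝ) ≤ j + 1) (1 / α))
  have hlt := Nat.lt_floor_add_one ((j : ℝ) ^ (1 / α))
  simp only [mseq]
  push_cast
  linarith

section

variable {α : ℝ}

lemma mseq_monotone (hα : 0 ≤ α) : Monotone (mseq α) := fun i j hij => by
  unfold mseq
  gcongr

lemma betaC_lt_one : betaC α < 1 :=
  (min_le_left _ _).trans_lt (by norm_num)

variable (hα : α ∈ Set.Ioo 0 1)
include hα

lemma betaC_pos : 0 < betaC α :=
  lt_min (by norm_num) (div_pos (by linarith [hα.2]) (by linarith [hα.1]))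

lemma betaC_lt_inv_sub_one : betaC α < 1 / α - 1 := by
  have hp : 0 < 1 / α - 1 := by rw [sub_pos, lt_div_iff₀ hα.1]; linarith [hα.2]
  calc betaC α ≤ (1 - α) / (2 * α) := min_le_right _ _
    _ = (1 / α - 1) / 2 := by rw [div_sub_one hα.1.ne']; ring
    _ < 1 / α - 1 := by linarith

lemma bseq_mul_mseq_succ_sub_le {j : ℕ} (hj : 1 ≤ j) :
    bseq α j * ((mseq α (j + 1) : ℝ) - mseq α j) ≤
      2 ^ j * (1 - (j : ℝ) ^ (-betaC α)) * (exp ((1 / α - 1) / j) + α * (j : ℝ) ^ (1 - 1 / α)) := by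
  obtain ⟨hα0, hα1⟩ := hα
  have hj' : (1 : ℝ) ≤ j := by exact_mod_cast hj
  have hjpos : (0 : ℝ) < j := by linarith
  set p := 1 / α with hp
  set e := (j : ℝ) ^ (-betaC α)
  have he : e ≤ 1 := rpow_le_one_of_one_le_of_nonpos hj' (by linarith [betaC_pos ⟨hα0, hα1⟩])
  have hαp : α * p = 1 := by rw [hp]; field_simp
  have hjp : (j : ℝ) ^ (1 - p) * (j : ℝ) ^ (p - 1) = 1 := by
    rw [← rpow_add hjpos]; simp
  have hbseq : bseq α j = 2 ^ j * (1 - e) * (α * (j : ℝ) ^ (1 - p) / 2) := by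
    rw [bseq, zpow_sub₀ two_ne_zero, zpow_natCast, zpow_one]; ring
  have hdiff := rpow_add_one_sub_rpow_le (p := p) (by rw [hp, le_div_iff₀ hα0]; linarith) hjpos
  have hΔ := mseq_succ_sub_le α j
  have hinner : α * (j : ℝ) ^ (1 - p) * (((j : ℝ) + 1) ^ p - (j : ℝ) ^ p + 1) ≤
      exp ((p - 1) / j) + α * (j : ℝ) ^ (1 - p) := by
    have h := mul_le_mul_of_nonneg_left hdiff (by positivity : 0 ≤ α * (j : ℝ) ^ (1 - p))
    set E := exp ((p - 1) / j)
    have hcancel : α * (j : ℝ) ^ (1 - p) * (p * (j : ℝ) ^ (p - 1) * E) = E := by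
      linear_combination (E * α * p) * hjp + E * hαp
    linarith
  have hstep : α * (j : ℝ) ^ (1 - p) / 2 * ((mseq α (j + 1) : ℝ) - mseq α j) ≤
      exp ((p - 1) / j) + α * (j : ℝ) ^ (1 - p) := by
    have h := mul_le_mul_of_nonneg_left hΔ (by positivity : 0 ≤ α * (j : ℝ) ^ (1 - p) / 2)
    linarith
  calc bseq α j * ((mseq α (j + 1) : ℝ) - mseq α j)
      = 2 ^ j * (1 - e) * (α * (j : ℝ) ^ (1 - p) / 2 * ((mseq α (j + 1) : ℝ) - mseq α j)) := by
        rw [hbseq]; ring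
    _ ≤ _ := mul_le_mul_of_nonneg_left hstep (mul_nonneg (by positivity) (by linarith))

lemma eventually_exp_add_rpow_le :
    ∀ᶠ j : ℕ in atTop,
      exp ((1 / α - 1) / j) + α * (j : ℝ) ^ (1 - 1 / α) ≤ 1 + (j : ℝ) ^ (-betaC α) / 4 := by
  set p := 1 / α
  have hp : 0 ≤ p - 1 := by linarith [betaC_pos hα, betaC_lt_inv_sub_one hα]
  filter_upwards [eventually_mul_rpow_neg_add_le betaC_lt_one (betaC_lt_inv_sub_one hα)
      (2 * (p - 1)) α (by norm_num : (0 : ℝ) < 1 / 4),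
    eventually_ge_atTop ⌈p - 1⌉₊, eventually_gt_atTop 0] with j hsmall hjp hj0
  have hjpos : (0 : ℝ) < j := by exact_mod_cast hj0
  have hexp : exp ((p - 1) / j) - 1 ≤ 2 * ((p - 1) / j) :=
    exp_sub_one_le_two_mul (div_nonneg hp hjpos.le)
      ((div_le_one hjpos).2 ((Nat.le_ceil _).trans (by exact_mod_cast hjp)))
  rw [rpow_neg_one, neg_sub] at hsmall
  rw [div_eq_mul_inv] at hexp ⊢
  linarith

lemma eventually_neg_two_pow_add_bseq_mul_le :
    ∀ᶠ j : ℕ in atTop, -2 ^ j + bseq α j * ((mseq α (j + 1) : ℝ) - mseq α j) ≤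
      -(1 / 4) * 2 ^ j * (j : ℝ) ^ (-betaC α) := by
  filter_upwards [eventually_exp_add_rpow_le hα, eventually_ge_atTop 1] with j hw hj
  have hj' : (1 : ℝ) ≤ j := by exact_mod_cast hj
  set e := (j : ℝ) ^ (-betaC α)
  have he1 : e ≤ 1 := rpow_le_one_of_one_le_of_nonpos hj' (by linarith [betaC_pos hα])
  have h2 : (0 : ℝ) < 2 ^ j := by positivity
  calc -2 ^ j + bseq α j * ((mseq α (j + 1) : ℝ) - mseq α j)
      ≤ -2 ^ j + 2 ^ j * (1 - e) * (1 + e / 4) := by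
        have := mul_le_mul_of_nonneg_left hw (mul_nonneg h2.le (by linarith : 0 ≤ 1 - e))
        linarith [bseq_mul_mseq_succ_sub_le hα hj]
    _ = -(1 / 4) * 2 ^ j * e - 2 ^ j * e * (1 / 2 + e / 4) := by ring
    _ ≤ -(1 / 4) * 2 ^ j * e := by
        have : 0 ≤ 2 ^ j * e * (1 / 2 + e / 4) := by positivity
        linarith

end

/-- There are constants `C, c > 0` depending only on `α` so that for all `j ≥ 1` and all
`t ≤ b_j`, one has `log (φ_(j+1)(t) / φ_j(t)) ≤ -c 2^j j^(-β) + C`. -/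
theorem statement7 (α : ℝ) (hα : α ∈ Set.Ioo (0 : ℝ) 1) :
    ∃ C > (0 : ℝ), ∃ c > (0 : ℝ), ∀ j : ℕ, 1 ≤ j → ∀ t : ℝ, t ≤ bseq α j →
      Real.log (phi α (j + 1) t / phi α j t) ≤ -c * 2 ^ j * (j : ℝ) ^ (-betaC α) + C := by
  obtain ⟨C, hC, hbound⟩ := exists_pos_forall_le_of_eventually_le
    ((eventually_neg_two_pow_add_bseq_mul_le hα).mono fun j hj => sub_nonpos.2 hj)
  refine ⟨C, hC, 1 / 4, by norm_num, fun j _ t ht => ?_⟩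
  have hΔ : (0 : ℝ) ≤ (mseq α (j + 1) : ℝ) - mseq α j :=
    sub_nonneg.2 (by exact_mod_cast mseq_monotone hα.1.le j.le_succ)
  rw [log_phi_succ_div_phi]
  linarith [mul_le_mul_of_nonneg_right ht hΔ, hbound j]
end
end
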